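/- If (b,c) is a connected weighted graph with c ≢ 0, then every Dirichlet form Q associated with (b,c) is transient. -/
import Mathlib


open scoped ENNReal NNReal BigOperators
open MeasureTheory Filter

/-- A weighted graph `(b,c)` over a vertex set `V`. -/
structure WeightedGraph (V : Type*) where
  b : V → V → ℝ
  c : V → ℝ
  b_nonneg : ∀ x y, 0 ≤ b x y
  b_diag : ∀ x, b x x = 0
  b_symm : ∀ x y, b x y = b y x
  b_summable : ∀ x, Summable fun y => b x y
  c_nonneg : ∀ x, 0 ≤ c x

/-- Membership in `ℓ²(V,m)`. -/
def MemL2 {V : Type*} (m : V → ℝ) (u : V → ℝ) : Prop :=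
  Summable fun x => u x ^ 2 * m x

/-- The inner product of `ℓ²(V,m)`. -/
noncomputable def l2inner {V : Type*} (m : V → ℝ) (u v : V → ℝ) : ℝ :=
  ∑' x, u x * v x * m x

namespace WeightedGraph

variable {V : Type*} (G : WeightedGraph V)

/-- The energy functional `Q̃` with values in `[0,∞]`. -/
noncomputable def energy (u : V → ℝ) : ℝ≥0∞ :=
  (1 / 2) * ∑' p : V × V, ENNReal.ofReal (G.b p.1 p.2 * (u p.1 - u p.2) ^ 2)
    + ∑' x, ENNReal.ofReal (G.c x * u x ^ 2)

/-- The functions of finite energy (`D̃`). -/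
def FiniteEnergy (u : V → ℝ) : Prop := G.energy u < ⊤

/-- The real-valued bilinear energy form (meaningful on functions of finite energy). -/
noncomputable def energyBilin (u v : V → ℝ) : ℝ :=
  (1 / 2) * ∑' p : V × V, G.b p.1 p.2 * (u p.1 - u p.2) * (v p.1 - v p.2)
    + ∑' x, G.c x * u x * v x

/-- The generalized vertex degree. -/
noncomputable def deg (x : V) : ℝ := (∑' y, G.b x y) + G.c x

/-- The formal Laplacian `L̃` associated with `(b,c)` and the measure `m`. -/
noncomputable def formalL (m : V → ℝ) (u : V → ℝ) (x : V) : ℝ :=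
  ((∑' y, G.b x y * (u x - u y)) + G.c x * u x) / m x

/-- Connectedness of the weighted graph: any two vertices are joined by a path of edges. -/
def Connected : Prop :=
  ∀ x y : V, ∃ (n : ℕ) (p : ℕ → V), p 0 = x ∧ p n = y ∧ ∀ i < n, 0 < G.b (p i) (p (i + 1))

/-- The squared distance of the Yamasaki space with base point `o`. -/
noncomputable def ydistSq (o : V) (u v : V → ℝ) : ℝ :=
  (G.energy (fun x => u x - v x)).toReal + (u o - v o) ^ 2

/-- The domain of the regular Dirichlet form `Q^(D)`: the closure of the finitely
supported functions in `D̃ ∩ ℓ²(V,m)` with respect to the form norm. -/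
def regDom (m : V → ℝ) : Set (V → ℝ) :=
  {u | G.FiniteEnergy u ∧ MemL2 m u ∧
    ∃ f : ℕ → V → ℝ, (∀ n, (Function.support (f n)).Finite) ∧
      Filter.Tendsto
        (fun n => (G.energy (fun x => u x - f n x)).toReal + ∑' x, (u x - f n x) ^ 2 * m x)
        Filter.atTop (nhds 0)}

/-- Transience of a Dirichlet form given by its domain: existence of a strictly positive
reference function `g ∈ ℓ¹(V,m) ∩ ℓ^∞(V)` with `⟨|u|,g⟩ ≤ Q(u)^{1/2}` on the domain. -/
def FormTransient (m : V → ℝ) (dom : Set (V → ℝ)) : Prop :=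
  ∃ g : V → ℝ, (∀ x, 0 < g x) ∧ (Summable fun x => g x * m x) ∧ (∃ C, ∀ x, g x ≤ C) ∧
    ∀ u ∈ dom, ∑' x, |u x| * g x * m x ≤ Real.sqrt (G.energyBilin u u)

end WeightedGraph

/-- The data of a Dirichlet form `Q` associated with a weighted graph `(b,c)` on `ℓ²(V,m)`,
together with its semigroup `T t = e^{-tL}` and resolvent `R α = (L+α)^{-1}`, with the
standard properties: `Q` is a restriction of `Q̃` with `D(Q^(D)) ⊆ D(Q) ⊆ D(Q^(N))`,
the semigroup is symmetric, Markovian, positivity preserving, the resolvent is characterized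
by the form, and the resolvent is the Laplace transform of the semigroup. -/
structure FormSetup {V : Type*} (G : WeightedGraph V) (m : V → ℝ) where
  dom : Set (V → ℝ)
  dom_fe : ∀ u ∈ dom, G.FiniteEnergy u
  dom_l2 : ∀ u ∈ dom, MemL2 m u
  reg_sub : G.regDom m ⊆ dom
  T : ℝ → (V → ℝ) → V → ℝ
  R : ℝ → (V → ℝ) → V → ℝ
  T_linear : ∀ t, IsLinearMap ℝ (T t)
  R_linear : ∀ α, IsLinearMap ℝ (R α)
  T_semigroup : ∀ s t : ℝ, 0 < s → 0 < t → ∀ f, T (s + t) f = T s (T t f)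
  T_l2 : ∀ t : ℝ, 0 < t → ∀ f, MemL2 m f → MemL2 m (T t f)
  T_symm : ∀ t : ℝ, 0 < t → ∀ f g, MemL2 m f → MemL2 m g →
    l2inner m (T t f) g = l2inner m f (T t g)
  T_contraction : ∀ t : ℝ, 0 < t → ∀ f, MemL2 m f →
    ∑' x, T t f x ^ 2 * m x ≤ ∑' x, f x ^ 2 * m x
  T_pos : ∀ t : ℝ, 0 < t → ∀ f, (∀ x, 0 ≤ f x) → ∀ x, 0 ≤ T t f x
  T_markov : ∀ t : ℝ, 0 < t → ∀ f, (∀ x, 0 ≤ f x ∧ f x ≤ 1) →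
    ∀ x, 0 ≤ T t f x ∧ T t f x ≤ 1
  T_cont : ∀ f, MemL2 m f → ∀ x, ContinuousOn (fun t => T t f x) (Set.Ioi (0 : ℝ))
  R_mem : ∀ α : ℝ, 0 < α → ∀ f, MemL2 m f → R α f ∈ dom
  R_pos : ∀ α : ℝ, 0 < α → ∀ f, (∀ x, 0 ≤ f x) → ∀ x, 0 ≤ R α f x
  R_char : ∀ α : ℝ, 0 < α → ∀ f, MemL2 m f → ∀ v ∈ dom,
    G.energyBilin (R α f) v + α * l2inner m (R α f) v = l2inner m f v
  R_laplace : ∀ α : ℝ, 0 < α → ∀ f, MemL2 m f → (∀ x, 0 ≤ f x) → ∀ y,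
    ENNReal.ofReal (R α f y) =
      ∫⁻ t in Set.Ioi (0 : ℝ), ENNReal.ofReal (Real.exp (-α * t) * T t f y)

namespace FormSetup

variable {V : Type*} {G : WeightedGraph V} {m : V → ℝ}

open scoped Classical in
/-- The Green function `G(x,y) = ∫₀^∞ (e^{-tL} δ_x)(y) dt`, with values in `[0,∞]`. -/
noncomputable def green (S : FormSetup G m) (x y : V) : ℝ≥0∞ :=
  ∫⁻ t in Set.Ioi (0 : ℝ), ENNReal.ofReal (S.T t (fun z => if z = x then 1 else 0) y)

/-- The extended Dirichlet space `D(Q)_e`: functions which are pointwise limits of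
`Q`-Cauchy sequences from `D(Q)`. -/
def extDom (S : FormSetup G m) : Set (V → ℝ) :=
  {u | ∃ f : ℕ → V → ℝ, (∀ n, f n ∈ S.dom) ∧
    (∀ ε > (0 : ℝ), ∃ N, ∀ p ≥ N, ∀ q ≥ N,
      G.energyBilin (fun x => f p x - f q x) (fun x => f p x - f q x) < ε) ∧
    ∀ x, Filter.Tendsto (fun n => f n x) Filter.atTop (nhds (u x))}

/-- Stochastic completeness: the resolvent `(L+1)^{-1}`, extended to `ℓ^∞(V)` by monotone
limits, maps the constant function `1` to `1`. -/
def StochComplete (S : FormSetup G m) : Prop :=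
  ∀ f : ℕ → V → ℝ, (∀ n, MemL2 m (f n)) →
    (∀ n x, 0 ≤ f n x ∧ f n x ≤ f (n + 1) x ∧ f n x ≤ 1) →
    (∀ x, Filter.Tendsto (fun n => f n x) Filter.atTop (nhds 1)) →
    ∀ x, Filter.Tendsto (fun n => S.R 1 (f n) x) Filter.atTop (nhds 1)

end FormSetup

section Aux

namespace WeightedGraph

variable {V : Type*} (G : WeightedGraph V)

lemma energyBilin_self_eq (u : V → ℝ) :
    G.energyBilin u u = (1/2) * ∑' p : V × V, G.b p.1 p.2 * (u p.1 - u p.2) ^ 2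
      + ∑' x, G.c x * u x ^ 2 := by
  unfold energyBilin
  congr 1
  · congr 1
    exact tsum_congr fun p => by ring
  · exact tsum_congr fun x => by ring

lemma summable_of_fe (u : V → ℝ) (h : G.FiniteEnergy u) :
    Summable (fun p : V × V => G.b p.1 p.2 * (u p.1 - u p.2) ^ 2) ∧
    Summable (fun x => G.c x * u x ^ 2) := by
  unfold FiniteEnergy energy at h
  have h1 : (1/2 : ℝ≥0∞) * ∑' p : V × V, ENNReal.ofReal (G.b p.1 p.2 * (u p.1 - u p.2) ^ 2)
      ≠ ⊤ := (lt_of_le_of_lt le_self_add h).ne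
  have h2 : (∑' x, ENNReal.ofReal (G.c x * u x ^ 2)) ≠ ⊤ :=
    (lt_of_le_of_lt le_add_self h).ne
  have h1' : (∑' p : V × V, ENNReal.ofReal (G.b p.1 p.2 * (u p.1 - u p.2) ^ 2)) ≠ ⊤ := by
    intro ht
    rw [ht, ENNReal.mul_top (by norm_num)] at h1
    exact h1 rfl
  constructor
  · have := ENNReal.summable_toReal h1'
    refine this.congr fun p => ?_
    exact ENNReal.toReal_ofReal (mul_nonneg (G.b_nonneg _ _) (sq_nonneg _))
  · have := ENNReal.summable_toReal h2
    refine this.congr fun x => ?_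
    exact ENNReal.toReal_ofReal (mul_nonneg (G.c_nonneg _) (sq_nonneg _))

lemma energyBilin_self_nonneg (u : V → ℝ) : 0 ≤ G.energyBilin u u := by
  rw [G.energyBilin_self_eq u]
  have h1 : (0:ℝ) ≤ ∑' p : V × V, G.b p.1 p.2 * (u p.1 - u p.2) ^ 2 :=
    tsum_nonneg fun p => mul_nonneg (G.b_nonneg _ _) (sq_nonneg _)
  have h2 : (0:ℝ) ≤ ∑' x, G.c x * u x ^ 2 :=
    tsum_nonneg fun x => mul_nonneg (G.c_nonneg _) (sq_nonneg _)
  positivity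

lemma est_base (u : V → ℝ) (h : G.FiniteEnergy u) (x₀ : V) :
    G.c x₀ * u x₀ ^ 2 ≤ G.energyBilin u u := by
  rw [G.energyBilin_self_eq u]
  have hS := (G.summable_of_fe u h).2
  have h1 : (0:ℝ) ≤ (1/2) * ∑' p : V × V, G.b p.1 p.2 * (u p.1 - u p.2) ^ 2 := by
    have : (0:ℝ) ≤ ∑' p : V × V, G.b p.1 p.2 * (u p.1 - u p.2) ^ 2 :=
      tsum_nonneg fun p => mul_nonneg (G.b_nonneg _ _) (sq_nonneg _)
    positivity
  have h2 : G.c x₀ * u x₀ ^ 2 ≤ ∑' x, G.c x * u x ^ 2 :=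
    Summable.le_tsum hS x₀ fun j _ => mul_nonneg (G.c_nonneg _) (sq_nonneg _)
  linarith

lemma est_edge (u : V → ℝ) (h : G.FiniteEnergy u) {x y : V} (hxy : x ≠ y) :
    G.b x y * (u x - u y) ^ 2 ≤ G.energyBilin u u := by
  classical
  rw [G.energyBilin_self_eq u]
  have hS := (G.summable_of_fe u h).1
  have h2 : (0:ℝ) ≤ ∑' z, G.c z * u z ^ 2 :=
    tsum_nonneg fun z => mul_nonneg (G.c_nonneg _) (sq_nonneg _)
  have hne : ((x, y) : V × V) ≠ (y, x) := by
    intro hh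
    exact hxy (congrArg Prod.fst hh)
  have hsum : ∑ p ∈ ({(x, y), (y, x)} : Finset (V × V)),
      G.b p.1 p.2 * (u p.1 - u p.2) ^ 2
      ≤ ∑' p : V × V, G.b p.1 p.2 * (u p.1 - u p.2) ^ 2 :=
    Summable.sum_le_tsum _ (fun p _ => mul_nonneg (G.b_nonneg _ _) (sq_nonneg _)) hS
  rw [Finset.sum_pair hne] at hsum
  have hsymm : G.b y x * (u y - u x) ^ 2 = G.b x y * (u x - u y) ^ 2 := by
    rw [G.b_symm y x]; ring
  rw [hsymm] at hsum
  linarith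

/-- Pointwise estimate: on a connected graph with `c x₀ > 0`, each point evaluation is
bounded by the form norm. -/
lemma pointwise_est (hconn : G.Connected) {x₀ : V} (hx₀ : 0 < G.c x₀) (x : V) :
    ∃ C : ℝ, 1 ≤ C ∧ ∀ u : V → ℝ, G.FiniteEnergy u →
      |u x| ≤ C * Real.sqrt (G.energyBilin u u) := by
  obtain ⟨n, p, hp0, hpn, hstep⟩ := hconn x₀ x
  suffices H : ∀ i, i ≤ n → ∃ C : ℝ, 1 ≤ C ∧ ∀ u : V → ℝ, G.FiniteEnergy u →
      |u (p i)| ≤ C * Real.sqrt (G.energyBilin u u) by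
    obtain ⟨C, hC1, hC⟩ := H n le_rfl
    exact ⟨C, hC1, by rwa [hpn] at hC⟩
  intro i
  induction i with
  | zero =>
    intro _
    refine ⟨max 1 (Real.sqrt (1 / G.c x₀)), le_max_left _ _, fun u hu => ?_⟩
    have hE := G.energyBilin_self_nonneg u
    have hb := G.est_base u hu x₀
    have h1 : u x₀ ^ 2 ≤ (1 / G.c x₀) * G.energyBilin u u := by
      rw [div_mul_eq_mul_div, le_div_iff₀ hx₀, one_mul]
      nlinarith
    have h2 : |u (p 0)| ≤ Real.sqrt (1 / G.c x₀) * Real.sqrt (G.energyBilin u u) := by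
      rw [hp0, ← Real.sqrt_sq_eq_abs,
        ← Real.sqrt_mul (by positivity : (0:ℝ) ≤ 1 / G.c x₀)]
      exact Real.sqrt_le_sqrt h1
    refine h2.trans ?_
    exact mul_le_mul_of_nonneg_right (le_max_right _ _) (Real.sqrt_nonneg _)
  | succ i ih =>
    intro hin
    obtain ⟨C, hC1, hC⟩ := ih (Nat.le_of_succ_le hin)
    have hbi : 0 < G.b (p i) (p (i + 1)) := hstep i (Nat.lt_of_succ_le hin)
    refine ⟨C + Real.sqrt (1 / G.b (p i) (p (i + 1))),
      le_trans hC1 (le_add_of_nonneg_right (Real.sqrt_nonneg _)), fun u hu => ?_⟩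
    have hE := G.energyBilin_self_nonneg u
    have hne : p i ≠ p (i + 1) := by
      intro hh
      rw [hh, G.b_diag] at hbi
      exact lt_irrefl _ hbi
    have hedge := G.est_edge u hu hne
    have h1 : (u (p i) - u (p (i + 1))) ^ 2 ≤
        (1 / G.b (p i) (p (i + 1))) * G.energyBilin u u := by
      rw [div_mul_eq_mul_div, le_div_iff₀ hbi, one_mul]
      nlinarith
    have h2 : |u (p i) - u (p (i + 1))| ≤
        Real.sqrt (1 / G.b (p i) (p (i + 1))) * Real.sqrt (G.energyBilin u u) := by
      rw [← Real.sqrt_sq_eq_abs, ← Real.sqrt_mul (by positivity)]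
      exact Real.sqrt_le_sqrt h1
    have h3 : |u (p (i + 1))| ≤ |u (p i)| + |u (p i) - u (p (i + 1))| := by
      have := abs_sub_abs_le_abs_sub (u (p (i + 1))) (u (p i))
      have := abs_sub_comm (u (p i)) (u (p (i + 1)))
      calc |u (p (i + 1))| = |u (p i) + (u (p (i + 1)) - u (p i))| := by ring_nf
        _ ≤ |u (p i)| + |u (p (i + 1)) - u (p i)| := abs_add_le _ _
        _ = |u (p i)| + |u (p i) - u (p (i + 1))| := by rw [abs_sub_comm]
    calc |u (p (i + 1))| ≤ |u (p i)| + |u (p i) - u (p (i + 1))| := h3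
      _ ≤ C * Real.sqrt (G.energyBilin u u)
          + Real.sqrt (1 / G.b (p i) (p (i + 1))) * Real.sqrt (G.energyBilin u u) :=
        add_le_add (hC u hu) h2
      _ = (C + Real.sqrt (1 / G.b (p i) (p (i + 1)))) * Real.sqrt (G.energyBilin u u) := by
        ring

end WeightedGraph

end Aux

/-- on a connected graph with nonvanishing killing term `c ≢ 0`, every
associated Dirichlet form is transient. -/
theorem nonzero_c_transient {V : Type*} [Countable V] (G : WeightedGraph V)
    (m : V → ℝ) (hm : ∀ x, 0 < m x) (hconn : G.Connected) (hc : ∃ x, G.c x ≠ 0)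
    (S : FormSetup G m)
    (hpi : ∀ t : ℝ, 0 < t → ∀ f : V → ℝ, MemL2 m f → (∀ x, 0 ≤ f x) → f ≠ 0 →
      ∀ y, 0 < S.T t f y) :
    G.FormTransient m S.dom := by
  obtain ⟨x₀, hx₀⟩ := hc
  have hc₀ : 0 < G.c x₀ := lt_of_le_of_ne (G.c_nonneg x₀) (Ne.symm hx₀)
  -- pointwise constants
  choose C hC1 hC using G.pointwise_est hconn hc₀
  -- summable weights
  obtain ⟨e, he⟩ := Countable.exists_injective_nat V
  set w : V → ℝ := fun x => (1/2 : ℝ) ^ (e x + 1) with hw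
  have hw_pos : ∀ x, 0 < w x := fun x => by positivity
  have hws' : Summable fun n : ℕ => (1/2 : ℝ) ^ (n + 1) := by
    have h := (summable_geometric_of_lt_one (r := (1/2 : ℝ)) (by norm_num)
      (by norm_num)).mul_right (1/2 : ℝ)
    exact h.congr fun n => (pow_succ _ _).symm
  have hws : Summable w := hws'.comp_injective he
  have hwsum : ∑' x, w x ≤ 1 := by
    have h1 : ∑' x, w x ≤ ∑' n : ℕ, (1/2 : ℝ) ^ (n + 1) :=
      Summable.tsum_le_tsum_of_inj e he (fun c _ => by positivity) (fun b => le_rfl) hws hws'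
    have h2 : ∑' n : ℕ, (1/2 : ℝ) ^ (n + 1) = 1 := by
      have hg : ∑' n : ℕ, (1/2 : ℝ) ^ n = 2 := by
        rw [tsum_geometric_of_lt_one (by norm_num) (by norm_num)]; norm_num
      have : (fun n : ℕ => (1/2 : ℝ) ^ (n + 1)) = fun n : ℕ => (1/2) * (1/2 : ℝ) ^ n := by
        funext n; ring
      rw [this, tsum_mul_left, hg]; norm_num
    linarith
  -- the reference function
  refine ⟨fun x => min (w x / (C x * m x)) 1, fun x => ?_, ?_, ⟨1, fun x => min_le_right _ _⟩,
    ?_⟩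
  · have h1 : 0 < C x := lt_of_lt_of_le one_pos (hC1 x)
    have := hm x
    have := hw_pos x
    positivity
  · refine Summable.of_nonneg_of_le (fun x => ?_) (fun x => ?_) hws
    · have h1 : 0 < C x := lt_of_lt_of_le one_pos (hC1 x)
      have := hm x
      have := hw_pos x
      positivity
    · have h1 : 0 < C x := lt_of_lt_of_le one_pos (hC1 x)
      have hmx := hm x
      calc min (w x / (C x * m x)) 1 * m x ≤ (w x / (C x * m x)) * m x :=
            mul_le_mul_of_nonneg_right (min_le_left _ _) hmx.le
        _ = w x / C x := by field_simp
        _ ≤ w x := by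
            rw [div_le_iff₀ h1]
            nlinarith [hw_pos x, hC1 x]
  · intro u hu
    have hfe : G.FiniteEnergy u := S.dom_fe u hu
    set E : ℝ := Real.sqrt (G.energyBilin u u) with hE
    have hE0 : 0 ≤ E := Real.sqrt_nonneg _
    have key : ∀ x, |u x| * min (w x / (C x * m x)) 1 * m x ≤ w x * E := by
      intro x
      have h1 : 0 < C x := lt_of_lt_of_le one_pos (hC1 x)
      have hmx := hm x
      have hux := hC x u hfe
      calc |u x| * min (w x / (C x * m x)) 1 * m x
          ≤ |u x| * (w x / (C x * m x)) * m x := by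
            apply mul_le_mul_of_nonneg_right _ hmx.le
            exact mul_le_mul_of_nonneg_left (min_le_left _ _) (abs_nonneg _)
        _ = |u x| * (w x / C x) := by field_simp
        _ = (|u x| / C x) * w x := by ring
        _ ≤ E * w x := by
            apply mul_le_mul_of_nonneg_right _ (hw_pos x).le
            rw [div_le_iff₀ h1]
            linarith [hux]
        _ = w x * E := by ring
    have hmaj : Summable fun x => w x * E := hws.mul_right E
    have hmin : Summable fun x => |u x| * min (w x / (C x * m x)) 1 * m x := by
      refine Summable.of_nonneg_of_le (fun x => ?_) key hmaj
      have h1 : 0 < C x := lt_of_lt_of_le one_pos (hC1 x)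
      have hmx := hm x
      have := hw_pos x
      have : (0:ℝ) ≤ min (w x / (C x * m x)) 1 := le_min (by positivity) one_pos.le
      positivity
    calc ∑' x, |u x| * min (w x / (C x * m x)) 1 * m x
        ≤ ∑' x, w x * E := Summable.tsum_le_tsum key hmin hmaj
      _ = (∑' x, w x) * E := tsum_mul_right
      _ ≤ 1 * E := mul_le_mul_of_nonneg_right hwsum hE0
      _ = E := one_mul E
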